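/- arXiv:1203.6643 — 2 statements merged into one kernel-verified Lean document; each statement's English description precedes it below -/
import Mathlib

section
/- Let k be a field, n a positive integer, and a : Fin n → ℤ. For a matrix g in the subgroup P(a) = {g ∈ GL(n,k) : g i j = 0 whenever a i < a j}, define ρ(g) to be the matrix with ρ(g) i j = g i j if a i = a j and ρ(g) i j = 0 otherwise. Then ρ(g) is invertible for every g ∈ P(a), and ρ : P(a) → GL(n,k) is a group homomorphism. -/
/-- The determinant of a block upper-triangular matrix equals the determinant
of its block-diagonal part. -/
lemma det_blockDiag_aux {k : Type} [Field k] {n : ℕ} (a : Fin n → ℤ)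
    (g : Matrix (Fin n) (Fin n) k)
    (hg : ∀ i j : Fin n, a i < a j → g i j = 0) :
    (Matrix.of fun i j => if a i = a j then g i j else 0).det = g.det := by
  rw [Matrix.det_apply, Matrix.det_apply]
  apply Finset.sum_congr rfl
  intro σ _
  by_cases hσ : ∀ i, a (σ i) = a i
  · congr 1
    apply Finset.prod_congr rfl
    intro i _
    simp [hσ i]
  · push_neg at hσ
    obtain ⟨i, hi⟩ := hσ
    have h2 : ∃ j, a (σ j) < a j := by
      by_contra hc
      push_neg at hc
      have hsum : ∑ j, a (σ j) = ∑ j, a j := Equiv.sum_comp σ a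
      have := (Finset.sum_eq_sum_iff_of_le
        (fun j (_ : j ∈ Finset.univ) => hc j)).mp hsum.symm
      exact hi (this i (Finset.mem_univ i)).symm
    obtain ⟨j, hj⟩ := h2
    have h1 : (∏ i, Matrix.of (fun i j => if a i = a j then g i j else 0) (σ i) i) = 0 :=
      Finset.prod_eq_zero (Finset.mem_univ i) (by simp [hi])
    have h0 : (∏ i, g (σ i) i) = 0 :=
      Finset.prod_eq_zero (Finset.mem_univ j) (hg _ _ hj)
    rw [h1, h0]

/-- For `g` in the parabolic `P(a) = {g ∈ GL(n,k) : g i j = 0 whenever a i < a j}`,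
the block-diagonal part `ρ(g)` (keeping entries with `a i = a j`) is again invertible,
and `ρ` is multiplicative on `P(a)`. -/
theorem stmt_1 {k : Type} [Field k] {n : ℕ} (hn : 0 < n) (a : Fin n → ℤ)
    (ρ : Matrix (Fin n) (Fin n) k → Matrix (Fin n) (Fin n) k)
    (hρ : ∀ (g : Matrix (Fin n) (Fin n) k) (i j : Fin n),
      ρ g i j = if a i = a j then g i j else 0) :
    (∀ g : Matrix (Fin n) (Fin n) k, IsUnit g →
      (∀ i j : Fin n, a i < a j → g i j = 0) → IsUnit (ρ g)) ∧
    (∀ g h : Matrix (Fin n) (Fin n) k, IsUnit g → IsUnit h →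
      (∀ i j : Fin n, a i < a j → g i j = 0) →
      (∀ i j : Fin n, a i < a j → h i j = 0) →
      ρ (g * h) = ρ g * ρ h) := by
  constructor
  · intro g hg hgP
    have hrg : ρ g = Matrix.of fun i j => if a i = a j then g i j else 0 := by
      ext i j; simp [hρ]
    rw [Matrix.isUnit_iff_isUnit_det, hrg, det_blockDiag_aux a g hgP,
      ← Matrix.isUnit_iff_isUnit_det]
    exact hg
  · intro g h _ _ hgP hhP
    ext i j
    rw [Matrix.mul_apply, hρ]
    simp only [Matrix.mul_apply, hρ]
    by_cases hij : a i = a j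
    · rw [if_pos hij]
      apply Finset.sum_congr rfl
      intro l _
      by_cases hil : a i = a l
      · rw [if_pos hil, if_pos (hil ▸ hij)]
      · rw [if_neg hil, zero_mul]
        rcases lt_or_gt_of_ne (fun e => hil e) with hlt | hgt
        · rw [hgP i l hlt, zero_mul]
        · rw [hhP l j (hij ▸ hgt), mul_zero]
    · rw [if_neg hij]
      symm
      apply Finset.sum_eq_zero
      intro l _
      by_cases hil : a i = a l
      · rw [if_neg (fun e => hij (hil.trans e)), mul_zero]
      · rw [if_neg hil, zero_mul]
end

section
/- Let Y be an infinite set, n ≥ 2, and d : Fin n → ℝ with d i > 0 for all i. Define SS(d) := { x : Fin n → Y | for every subset I ⊆ Fin n such that x is constant on I, one has ∑_{i ∈ I} d i ≤ ∑_{i ∉ I} d i }. Then SS(d) is nonempty if and only if for every i₀ ∈ Fin n one has d i₀ ≤ ∑_{i ≠ i₀} d i. -/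
/-- Semistability criterion for `n` weighted points on an infinite set `Y`
(the combinatorial form of the Hilbert–Mumford criterion for `(ℙ¹)ⁿ ⫽ PGL₂`):
the semistable locus `SS(d)` is nonempty iff `d i₀ ≤ ∑_{i ≠ i₀} d i` for every `i₀`. -/
theorem stmt_5 {Y : Type} [Infinite Y] {n : ℕ} (hn : 2 ≤ n)
    (d : Fin n → ℝ) (hd : ∀ i, 0 < d i) :
    (∃ x : Fin n → Y, ∀ I : Finset (Fin n),
        (∀ i ∈ I, ∀ j ∈ I, x i = x j) → ∑ i ∈ I, d i ≤ ∑ i ∈ Iᶜ, d i) ↔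
    ∀ i₀ : Fin n, d i₀ ≤ ∑ i ∈ ({i₀}ᶜ : Finset (Fin n)), d i := by
  constructor
  · rintro ⟨x, hx⟩ i₀
    have := hx {i₀} (by simp)
    simpa using this
  · intro h
    obtain ⟨f⟩ : Nonempty (Fin n ↪ Y) := ⟨Fin.valEmbedding.trans (Infinite.natEmbedding Y)⟩
    refine ⟨f, fun I hI => ?_⟩
    rcases I.eq_empty_or_nonempty with rfl | ⟨i₀, hi₀⟩
    · simpa using Finset.sum_nonneg fun i _ => (hd i).le
    · have hsub : I ⊆ {i₀} := fun j hj => by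
        have := hI j hj i₀ hi₀
        simp [f.injective this]
      calc ∑ i ∈ I, d i ≤ ∑ i ∈ ({i₀} : Finset _), d i :=
            Finset.sum_le_sum_of_subset_of_nonneg hsub (fun i _ _ => (hd i).le)
        _ = d i₀ := by simp
        _ ≤ ∑ i ∈ ({i₀}ᶜ : Finset (Fin n)), d i := h i₀
        _ ≤ ∑ i ∈ Iᶜ, d i :=
            Finset.sum_le_sum_of_subset_of_nonneg (by intro j hj; simp only [Finset.mem_compl] at *; exact fun hjI => hj (hsub hjI))
              fun i _ _ => (hd i).le
end
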